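/- (Per-step mirror-descent regret inequality.) Let f : ℝ^d → ℝ be convex and differentiable, S ⊆ ℝ^d convex, ψ differentiable and σ-strongly convex with Bregman distance D_ψ, η > 0, z ∈ S, and let z⁺ ∈ S satisfy ⟨η ∇f(z) + ∇ψ(z⁺) − ∇ψ(z), w − z⁺⟩ ≥ 0 for all w ∈ S. Then for every comparator z^c ∈ S: η (f(z) − f(z^c)) ≤ D_ψ(z^c, z) − D_ψ(z^c, z⁺) + (η²/(2σ)) ‖∇f(z)‖². -/

import Mathlib

/-!
Convexity bounds `η (f z - f zc)` by `⟪η ∇f(z), z - zc⟫`; split this at `z⁺`. The part along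
`zc - z⁺` is bounded by the optimality condition, which the three-point identity turns into
`D(zc, z) - D(zc, z⁺) - D(z⁺, z)`. The part along `z - z⁺` is bounded by Young's inequality, and its
`σ/2 ‖z - z⁺‖²` term is absorbed by `D(z⁺, z)` through strong convexity.
-/

open scoped RealInnerProductSpace

theorem ConvexOn.le_sub_of_hasFDerivAt {E : Type*} [NormedAddCommGroup E] [NormedSpace ℝ E]
    {S : Set E} {f : E → ℝ} {f' : E →L[ℝ] ℝ} {x y : E} (hfc : ConvexOn ℝ S f)
    (hx : x ∈ S) (hy : y ∈ S) (hf : HasFDerivAt f f' x) : f' (y - x) ≤ f y - f x := by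
  have hline : HasDerivAt (f ∘ AffineMap.lineMap (k := ℝ) x y) (f' (y - x)) 0 := by
    refine HasFDerivAt.comp_hasDerivAt (0 : ℝ) (by simpa using hf) ?_
    simpa using AffineMap.hasDerivAt_lineMap
  have hconv := hfc.comp_affineMap (AffineMap.lineMap x y)
  simpa [slope] using hconv.le_slope_of_hasDerivAt (by simpa) (by simpa) one_pos hline

section InnerProductSpace

variable {E : Type*} [NormedAddCommGroup E] [InnerProductSpace ℝ E]

theorem ConvexOn.inner_le_sub_of_hasGradientAt [CompleteSpace E] {S : Set E} {f : E → ℝ}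
    {g x y : E} (hfc : ConvexOn ℝ S f) (hx : x ∈ S) (hy : y ∈ S) (hf : HasGradientAt f g x) :
    ⟪g, y - x⟫ ≤ f y - f x := by
  simpa using hfc.le_sub_of_hasFDerivAt hx hy hf.hasFDerivAt

theorem real_inner_le_norm_sq_div_add_norm_sq {σ : ℝ} (hσ : 0 < σ) (x y : E) :
    ⟪x, y⟫ ≤ ‖x‖ ^ 2 / (2 * σ) + σ / 2 * ‖y‖ ^ 2 := by
  have hsq : 0 ≤ ‖x - σ • y‖ ^ 2 := sq_nonneg _
  rw [norm_sub_sq_real, inner_smul_right, norm_smul, Real.norm_of_nonneg hσ.le] at hsq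
  rw [div_add' _ _ _ (by positivity), le_div_iff₀ (by positivity)]
  nlinarith

def bregmanDiv (ψ : E → ℝ) (ψ' : E → E) (x y : E) : ℝ :=
  ψ x - ψ y - ⟪ψ' y, x - y⟫

theorem bregmanDiv_three_point (ψ : E → ℝ) (ψ' : E → E) (x y z : E) :
    bregmanDiv ψ ψ' x y - bregmanDiv ψ ψ' x z - bregmanDiv ψ ψ' z y = ⟪ψ' z - ψ' y, x - z⟫ := by
  simp only [bregmanDiv, inner_sub_left, inner_sub_right]
  ring

end InnerProductSpace

theorem mirror_descent_per_step_regret_general {d : ℕ}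
    (S : Set (EuclideanSpace ℝ (Fin d)))
    (f : EuclideanSpace ℝ (Fin d) → ℝ) (f' : EuclideanSpace ℝ (Fin d) → EuclideanSpace ℝ (Fin d))
    (hfconv : ConvexOn ℝ Set.univ f)
    (hf : ∀ x, HasGradientAt f (f' x) x)
    (ψ : EuclideanSpace ℝ (Fin d) → ℝ) (ψ' : EuclideanSpace ℝ (Fin d) → EuclideanSpace ℝ (Fin d))
    (D : EuclideanSpace ℝ (Fin d) → EuclideanSpace ℝ (Fin d) → ℝ)
    (hD : ∀ z₁ z₂, D z₁ z₂ = ψ z₁ - ψ z₂ - ⟪ψ' z₂, z₁ - z₂⟫)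
    (σ : ℝ) (hσ : 0 < σ)
    (hstrong : ∀ z₁ z₂ : EuclideanSpace ℝ (Fin d), (σ / 2) * ‖z₁ - z₂‖ ^ 2 ≤ D z₁ z₂)
    (η : ℝ) (hη : 0 < η)
    (z zplus : EuclideanSpace ℝ (Fin d))
    (hopt : ∀ w ∈ S, (0 : ℝ) ≤ ⟪η • f' z + ψ' zplus - ψ' z, w - zplus⟫) :
    ∀ zc ∈ S, η * (f z - f zc) ≤ D zc z - D zc zplus + (η ^ 2 / (2 * σ)) * ‖f' z‖ ^ 2 := by
  intro zc hzc
  obtain rfl : D = bregmanDiv ψ ψ' := funext₂ hD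
  have hconv := hfconv.inner_le_sub_of_hasGradientAt trivial trivial (hf z) (y := zc)
  have hyoung := real_inner_le_norm_sq_div_add_norm_sq hσ (η • f' z) (z - zplus)
  have hoptimality : ⟪η • f' z, zplus - zc⟫ ≤ ⟪ψ' zplus - ψ' z, zc - zplus⟫ := by
    have := hopt zc hzc
    rw [add_sub_assoc, inner_add_left] at this
    rw [← neg_sub zc zplus, inner_neg_right]
    linarith
  calc η * (f z - f zc)
      ≤ ⟪η • f' z, z - zplus⟫ + ⟪η • f' z, zplus - zc⟫ := by
        rw [← inner_add_right, sub_add_sub_cancel, ← neg_sub zc z, inner_neg_right,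
          real_inner_smul_left]
        linarith [mul_le_mul_of_nonneg_left hconv hη.le]
    _ ≤ η ^ 2 / (2 * σ) * ‖f' z‖ ^ 2 + σ / 2 * ‖zplus - z‖ ^ 2
          + ⟪ψ' zplus - ψ' z, zc - zplus⟫ := by
        rw [norm_smul, mul_pow, Real.norm_of_nonneg hη.le, norm_sub_rev] at hyoung
        rw [div_mul_eq_mul_div]
        linarith
    _ ≤ _ := by
        linarith [hstrong zplus z, bregmanDiv_three_point ψ ψ' zc z zplus]

/-- Per-step mirror-descent regret inequality. -/
theorem mirror_descent_per_step_regret {d : ℕ}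
    (S : Set (EuclideanSpace ℝ (Fin d))) (hS : Convex ℝ S)
    (f : EuclideanSpace ℝ (Fin d) → ℝ) (f' : EuclideanSpace ℝ (Fin d) → EuclideanSpace ℝ (Fin d))
    (hfconv : ConvexOn ℝ Set.univ f)
    (hf : ∀ x, HasGradientAt f (f' x) x)
    (ψ : EuclideanSpace ℝ (Fin d) → ℝ) (ψ' : EuclideanSpace ℝ (Fin d) → EuclideanSpace ℝ (Fin d))
    (hψ : ∀ x, HasGradientAt ψ (ψ' x) x)
    (D : EuclideanSpace ℝ (Fin d) → EuclideanSpace ℝ (Fin d) → ℝ)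
    (hD : ∀ z₁ z₂, D z₁ z₂ = ψ z₁ - ψ z₂ - ⟪ψ' z₂, z₁ - z₂⟫)
    (σ : ℝ) (hσ : 0 < σ)
    (hstrong : ∀ z₁ z₂ : EuclideanSpace ℝ (Fin d), (σ / 2) * ‖z₁ - z₂‖ ^ 2 ≤ D z₁ z₂)
    (η : ℝ) (hη : 0 < η)
    (z zplus : EuclideanSpace ℝ (Fin d)) (hz : z ∈ S) (hzplus : zplus ∈ S)
    (hopt : ∀ w ∈ S, (0 : ℝ) ≤ ⟪η • f' z + ψ' zplus - ψ' z, w - zplus⟫) :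
    ∀ zc ∈ S, η * (f z - f zc) ≤ D zc z - D zc zplus + (η ^ 2 / (2 * σ)) * ‖f' z‖ ^ 2 :=
  mirror_descent_per_step_regret_general S f f' hfconv hf ψ ψ' D hD σ hσ hstrong η hη z zplus hopt
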